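/- The vector field K₃ = ∂x − y∂z is a Killing vector field for the metric g = (1/λ²)dx² + dy² + (x dy + dz)² on ℝ³. -/

import Mathlib

noncomputable section

/-- The Heisenberg metric g = (1/λ²)dx² + dy² + (x dy + dz)². -/
def gH (l : ℝ) (p v w : ℝ × ℝ × ℝ) : ℝ :=
  (1 / l ^ 2) * v.1 * w.1 + v.2.1 * w.2.1 +
    (p.1 * v.2.1 + v.2.2) * (p.1 * w.2.1 + w.2.2)

/-- Lie bracket of vector fields on ℝ³. -/
def bracket (X Y : ℝ × ℝ × ℝ → ℝ × ℝ × ℝ) : ℝ × ℝ × ℝ → ℝ × ℝ × ℝ :=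
  fun p => fderiv ℝ Y p (X p) - fderiv ℝ X p (Y p)

/-- The function p ↦ g_p(X p, Y p). -/
def gf (l : ℝ) (X Y : ℝ × ℝ × ℝ → ℝ × ℝ × ℝ) (p : ℝ × ℝ × ℝ) : ℝ :=
  gH l p (X p) (Y p)

/-- Directional derivative of a function along a vector field: (X·f)(p). -/
def dirD (X : ℝ × ℝ × ℝ → ℝ × ℝ × ℝ) (f : ℝ × ℝ × ℝ → ℝ) (p : ℝ × ℝ × ℝ) : ℝ :=
  fderiv ℝ f p (X p)

/-- The Koszul expression, equal to 2g(∇_X Y, Z) for the Levi-Civita connection ∇. -/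
def koszul (l : ℝ) (X Y Z : ℝ × ℝ × ℝ → ℝ × ℝ × ℝ) (p : ℝ × ℝ × ℝ) : ℝ :=
  dirD X (gf l Y Z) p + dirD Y (gf l X Z) p - dirD Z (gf l X Y) p
    + gf l (bracket X Y) Z p - gf l (bracket X Z) Y p - gf l (bracket Y Z) X p

/-- g(∇_X Y, Z), via the Koszul formula for the Levi-Civita connection of g. -/
def covInner (l : ℝ) (X Y Z : ℝ × ℝ × ℝ → ℝ × ℝ × ℝ) (p : ℝ × ℝ × ℝ) : ℝ :=
  (1 / 2) * koszul l X Y Z p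

/-- The Killing vector field K₃ = ∂x − y∂z. -/
def K3 : ℝ × ℝ × ℝ → ℝ × ℝ × ℝ := fun p => (1, 0, -p.2.1)

/-! The Koszul formula turns `g(∇_X K, Y) + g(∇_Y K, X)` into the Lie derivative `(L_K g)(X, Y)`,
for any vector fields. `K₃` generates the flow `(x, y, z) ↦ (x + t, y, z - t y)`, which preserves
`dx`, `dy` and `x dy + dz`; infinitesimally, the `x`-derivative of the coefficient `x` in
`x dy + dz` is cancelled by the bracket with the `-y ∂z` part of `K₃`, so `L_{K₃} g = 0`. -/

lemma gH_comm (l : ℝ) (p v w : ℝ × ℝ × ℝ) : gH l p v w = gH l p w v := by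
  unfold gH; ring

lemma gH_neg_left (l : ℝ) (p v w : ℝ × ℝ × ℝ) : gH l p (-v) w = -gH l p v w := by
  simp only [gH, Prod.fst_neg, Prod.snd_neg]; ring

lemma gf_comm (l : ℝ) (X Y : ℝ × ℝ × ℝ → ℝ × ℝ × ℝ) : gf l X Y = gf l Y X :=
  funext fun p => gH_comm l p (X p) (Y p)

lemma bracket_swap (X Y : ℝ × ℝ × ℝ → ℝ × ℝ × ℝ) (p : ℝ × ℝ × ℝ) :
    bracket Y X p = -bracket X Y p :=
  (neg_sub _ _).symm

/-- `(L_Z g)(X, Y) = Z(g(X, Y)) - g([Z, X], Y) - g(X, [Z, Y])`. -/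
def lieDerivMetric (l : ℝ) (Z X Y : ℝ × ℝ × ℝ → ℝ × ℝ × ℝ) (p : ℝ × ℝ × ℝ) : ℝ :=
  dirD Z (gf l X Y) p - gf l (bracket Z X) Y p - gf l X (bracket Z Y) p

/-- In the sum of the two Koszul expressions the derivatives along `X` and `Y` cancel by symmetry
of `g`, and the brackets `[X, Y]`, `[Y, X]` by antisymmetry. -/
lemma covInner_add_covInner_swap (l : ℝ) (X Y Z : ℝ × ℝ × ℝ → ℝ × ℝ × ℝ) (p : ℝ × ℝ × ℝ) :
    covInner l X Z Y p + covInner l Y Z X p = lieDerivMetric l Z X Y p := by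
  simp only [covInner, koszul, lieDerivMetric, gf_comm l Z, gf_comm l Y X]
  simp only [gf, bracket_swap Z, bracket_swap Y X, gH_neg_left, gH_comm l p (X p)]
  ring

lemma fderiv_gf_apply (l : ℝ) {X Y : ℝ × ℝ × ℝ → ℝ × ℝ × ℝ} {p : ℝ × ℝ × ℝ}
    (hX : DifferentiableAt ℝ X p) (hY : DifferentiableAt ℝ Y p) (v : ℝ × ℝ × ℝ) :
    fderiv ℝ (gf l X Y) p v =
      gH l p (fderiv ℝ X p v) (Y p) + gH l p (X p) (fderiv ℝ Y p v) +
        v.1 * ((X p).2.1 * (p.1 * (Y p).2.1 + (Y p).2.2) +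
          (Y p).2.1 * (p.1 * (X p).2.1 + (X p).2.2)) := by
  have hX' := hX.hasFDerivAt
  have hY' := hY.hasFDerivAt
  have hx : HasFDerivAt (fun q : ℝ × ℝ × ℝ => q.1) (ContinuousLinearMap.fst ℝ ℝ (ℝ × ℝ)) p :=
    hasFDerivAt_fst
  have hgf : HasFDerivAt (gf l X Y) _ p :=
    (((hX'.fst.const_mul (1 / l ^ 2)).mul hY'.fst).add (hX'.snd.fst.mul hY'.snd.fst)).add
      (((hx.mul hX'.snd.fst).add hX'.snd.snd).mul ((hx.mul hY'.snd.fst).add hY'.snd.snd))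
  rw [hgf.fderiv]
  simp only [gH, one_div, Pi.add_apply, Pi.mul_apply, smul_add, add_apply, smul_apply,
    ContinuousLinearMap.comp_apply, ContinuousLinearMap.coe_fst', ContinuousLinearMap.coe_snd',
    smul_eq_mul]
  ring

lemma fderiv_K3_apply (p v : ℝ × ℝ × ℝ) : fderiv ℝ K3 p v = (0, 0, -v.2.1) := by
  have hy : HasFDerivAt (fun q : ℝ × ℝ × ℝ => q.2.1) _ p :=
    ((ContinuousLinearMap.fst ℝ ℝ ℝ).comp (ContinuousLinearMap.snd ℝ ℝ (ℝ × ℝ))).hasFDerivAt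
  have hK3 : HasFDerivAt K3 _ p :=
    (hasFDerivAt_const (1 : ℝ) p).prodMk ((hasFDerivAt_const (0 : ℝ) p).prodMk hy.neg)
  rw [hK3.fderiv]
  simp

lemma lieDerivMetric_K3 (l : ℝ) {X Y : ℝ × ℝ × ℝ → ℝ × ℝ × ℝ} {p : ℝ × ℝ × ℝ}
    (hX : DifferentiableAt ℝ X p) (hY : DifferentiableAt ℝ Y p) :
    lieDerivMetric l K3 X Y p = 0 := by
  simp only [lieDerivMetric, dirD, gf, bracket, fderiv_gf_apply l hX hY, fderiv_K3_apply]
  simp only [K3, gH, Prod.fst_sub, Prod.snd_sub]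
  ring

theorem K3_killing_general (l : ℝ)
    (X Y : ℝ × ℝ × ℝ → ℝ × ℝ × ℝ)
    (hX : ContDiff ℝ (⊤ : ℕ∞) X) (hY : ContDiff ℝ (⊤ : ℕ∞) Y) (p : ℝ × ℝ × ℝ) :
    covInner l X K3 Y p + covInner l Y K3 X p = 0 := by
  rw [covInner_add_covInner_swap]
  exact lieDerivMetric_K3 l (hX.differentiable (by simp) p) (hY.differentiable (by simp) p)

/-- K₃ = ∂x − y∂z is a Killing field of g: g(∇_X K₃, Y) + g(∇_Y K₃, X) = 0
for all (smooth) vector fields X, Y. -/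
theorem K3_killing (l : ℝ) (hl : 0 < l)
    (X Y : ℝ × ℝ × ℝ → ℝ × ℝ × ℝ)
    (hX : ContDiff ℝ (⊤ : ℕ∞) X) (hY : ContDiff ℝ (⊤ : ℕ∞) Y) (p : ℝ × ℝ × ℝ) :
    covInner l X K3 Y p + covInner l Y K3 X p = 0 :=
  K3_killing_general l X Y hX hY p
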